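/- Let G be a graph, n = |V(G)|, and for each vertex v of G attach n + 1 new degree-one neighbors to v to obtain G'. Let F be a family of graphs each with minimum degree at least 2, let s be an integer, and set k = s·(n+1) + n. Then G has an F-free vertex deletion set of size at most s if and only if G' has an F-free vertex deletion set S with |N_{G'}[S]| ≤ k. -/
import Mathlib

/-- Closed neighborhood of a vertex set. -/
def closedNbhd {V : Type*} (G : SimpleGraph V) (S : Set V) : Set V :=
  S ∪ {v | ∃ u ∈ S, G.Adj u v}

/-- `S` is an `F`-free vertex deletion set of `G` for the family `F` (indexed by `ι`):
after removing `S`, `G` has no induced subgraph isomorphic to a member of `F`. -/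
def IsFFreeDeletionSet {V ι : Type*} {W : ι → Type*} (F : ∀ i, SimpleGraph (W i))
    (G : SimpleGraph V) (S : Set V) : Prop :=
  ∀ i, ¬ ∃ f : W i ↪ V, (∀ x, f x ∉ S) ∧
    ∀ a b, (F i).Adj a b ↔ G.Adj (f a) (f b)

/-- The graph `G'` obtained from `G` by attaching `m` new degree-one neighbors
(encoded `Sum.inr (v, i)`) to each vertex `v`. -/
def addPendants {V : Type*} (G : SimpleGraph V) (m : ℕ) :
    SimpleGraph (V ⊕ V × Fin m) :=
  SimpleGraph.fromRel (fun a b =>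
    match a, b with
    | Sum.inl a, Sum.inl b => G.Adj a b
    | Sum.inl a, Sum.inr (w, _) => a = w
    | _, _ => False)

lemma addPendants_adj_inl_inl {V : Type*} (G : SimpleGraph V) (m : ℕ) (a b : V) :
    (addPendants G m).Adj (Sum.inl a) (Sum.inl b) ↔ G.Adj a b := by
  simp only [addPendants, SimpleGraph.fromRel_adj]
  constructor
  · rintro ⟨-, h | h⟩
    · exact h
    · exact h.symm
  · intro h
    exact ⟨by simp [h.ne], Or.inl h⟩

lemma addPendants_adj_inr {V : Type*} (G : SimpleGraph V) (m : ℕ) (x : V ⊕ V × Fin m)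
    (w : V) (i : Fin m) :
    (addPendants G m).Adj x (Sum.inr (w, i)) ↔ x = Sum.inl w := by
  simp only [addPendants, SimpleGraph.fromRel_adj]
  constructor
  · rintro ⟨hne, h | h⟩
    · cases x with
      | inl a => simp_all
      | inr p => simp_all
    · simp_all
  · rintro rfl
    exact ⟨by simp, Or.inl rfl⟩

lemma ncard_prod' {α β : Type*} (s : Set α) (t : Set β) :
    (s ×ˢ t).ncard = s.ncard * t.ncard := by
  rw [← Nat.card_coe_set_eq, ← Nat.card_coe_set_eq, ← Nat.card_coe_set_eq,
    Nat.card_congr (Equiv.Set.prod s t), Nat.card_prod]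

theorem secluded_ffvd_np_hardness_reduction {V ι : Type*} [Fintype V]
    {W : ι → Type*} [∀ i, Fintype (W i)] (F : ∀ i, SimpleGraph (W i))
    (hmindeg : ∀ i, ∀ v : W i, 2 ≤ ((F i).neighborSet v).ncard)
    (G : SimpleGraph V) (s : ℕ) :
    (∃ S : Set V, IsFFreeDeletionSet F G S ∧ S.ncard ≤ s) ↔
      (∃ S' : Set (V ⊕ V × Fin (Fintype.card V + 1)),
        IsFFreeDeletionSet F (addPendants G (Fintype.card V + 1)) S' ∧
        (closedNbhd (addPendants G (Fintype.card V + 1)) S').ncard ≤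
          s * (Fintype.card V + 1) + Fintype.card V) := by
  classical
  constructor
  · rintro ⟨S, hF, hcard⟩
    refine ⟨Sum.inl '' S, ?_, ?_⟩
    · intro i ⟨f, hfS, hadj⟩
      have hinl : ∀ x, ∃ v, f x = Sum.inl v := by
        intro x
        cases hx : f x with
        | inl v => exact ⟨v, rfl⟩
        | inr p =>
          exfalso
          obtain ⟨w, j⟩ := p
          have h2 := hmindeg i x
          obtain ⟨a, b, ha, hb, hab⟩ :=
            (Set.one_lt_ncard_iff (((F i).neighborSet x).toFinite)).mp (by omega)
          have hfa : f a = Sum.inl w := by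
            have := (hadj x a).mp ha
            rw [hx] at this
            exact (addPendants_adj_inr G _ (f a) w j).mp this.symm
          have hfb : f b = Sum.inl w := by
            have := (hadj x b).mp hb
            rw [hx] at this
            exact (addPendants_adj_inr G _ (f b) w j).mp this.symm
          exact hab (f.injective (hfa.trans hfb.symm))
      choose g hg using hinl
      refine hF i ⟨⟨g, fun a b hab => f.injective (by rw [hg a, hg b, hab])⟩, ?_, ?_⟩
      · intro x hx
        exact hfS x (by rw [hg x]; exact Set.mem_image_of_mem _ hx)
      · intro a b
        rw [hadj a b, hg a, hg b, addPendants_adj_inl_inl]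
        exact Iff.rfl
    · have hsub : closedNbhd (addPendants G (Fintype.card V + 1)) (Sum.inl '' S) ⊆
          (Set.range Sum.inl) ∪
            (Sum.inr '' (S ×ˢ (Set.univ : Set (Fin (Fintype.card V + 1))))) := by
        rintro x (hx | ⟨u, ⟨v, hv, rfl⟩, hadj⟩)
        · obtain ⟨v, -, rfl⟩ := hx
          exact Or.inl ⟨v, rfl⟩
        · cases x with
          | inl b => exact Or.inl ⟨b, rfl⟩
          | inr p =>
            obtain ⟨w, j⟩ := p
            have := (addPendants_adj_inr G _ (Sum.inl v) w j).mp hadj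
            obtain rfl : v = w := Sum.inl_injective this
            exact Or.inr ⟨(v, j), ⟨hv, trivial⟩, rfl⟩
      have h1 : (Set.range (Sum.inl : V → V ⊕ V × Fin (Fintype.card V + 1))).ncard
          = Fintype.card V := by
        rw [← Set.image_univ, Set.ncard_image_of_injective _ Sum.inl_injective,
          Set.ncard_univ, Nat.card_eq_fintype_card]
      have h2 : ((Sum.inr '' (S ×ˢ (Set.univ : Set (Fin (Fintype.card V + 1))))) :
            Set (V ⊕ V × Fin (Fintype.card V + 1))).ncard
          = S.ncard * (Fintype.card V + 1) := by
        rw [Set.ncard_image_of_injective _ Sum.inr_injective, ncard_prod',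
          Set.ncard_univ, Nat.card_eq_fintype_card, Fintype.card_fin]
      have h3 : S.ncard * (Fintype.card V + 1) ≤ s * (Fintype.card V + 1) :=
        Nat.mul_le_mul_right _ hcard
      calc (closedNbhd (addPendants G (Fintype.card V + 1)) (Sum.inl '' S)).ncard
          ≤ ((Set.range Sum.inl) ∪
              (Sum.inr '' (S ×ˢ (Set.univ : Set (Fin (Fintype.card V + 1))))) :
              Set (V ⊕ V × Fin (Fintype.card V + 1))).ncard :=
            Set.ncard_le_ncard hsub (Set.toFinite _)
        _ ≤ (Set.range (Sum.inl : V → V ⊕ V × Fin (Fintype.card V + 1))).ncard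
              + ((Sum.inr '' (S ×ˢ (Set.univ : Set (Fin (Fintype.card V + 1))))) :
                  Set (V ⊕ V × Fin (Fintype.card V + 1))).ncard :=
            Set.ncard_union_le _ _
        _ ≤ s * (Fintype.card V + 1) + Fintype.card V := by
            rw [h1, h2]; omega
  · rintro ⟨S', hF, hcard⟩
    refine ⟨{v | Sum.inl v ∈ S'}, ?_, ?_⟩
    · intro i ⟨f, hfS, hadj⟩
      refine hF i ⟨f.trans ⟨Sum.inl, Sum.inl_injective⟩, fun x => hfS x, fun a b => ?_⟩
      rw [hadj a b]
      exact (addPendants_adj_inl_inl G _ (f a) (f b)).symm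
    · set S : Set V := {v | Sum.inl v ∈ S'} with hS
      by_contra hgt
      push_neg at hgt
      have hsub : (Sum.inl '' S) ∪
            (Sum.inr '' (S ×ˢ (Set.univ : Set (Fin (Fintype.card V + 1))))) ⊆
          closedNbhd (addPendants G (Fintype.card V + 1)) S' := by
        rintro x (⟨v, hv, rfl⟩ | ⟨⟨v, j⟩, ⟨hv, -⟩, rfl⟩)
        · exact Or.inl hv
        · exact Or.inr ⟨Sum.inl v, hv, (addPendants_adj_inr G _ _ v j).mpr rfl⟩
      have hdisj : Disjoint (Sum.inl '' S)
          ((Sum.inr '' (S ×ˢ (Set.univ : Set (Fin (Fintype.card V + 1))))) :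
            Set (V ⊕ V × Fin (Fintype.card V + 1))) := by
        rw [Set.disjoint_left]
        rintro x ⟨v, -, rfl⟩ ⟨p, -, h⟩
        exact Sum.inl_ne_inr h.symm
      have hge : S.ncard + S.ncard * (Fintype.card V + 1) ≤
          (closedNbhd (addPendants G (Fintype.card V + 1)) S').ncard := by
        have := Set.ncard_le_ncard hsub (Set.toFinite _)
        rwa [Set.ncard_union_eq hdisj (Set.toFinite _) (Set.toFinite _),
          Set.ncard_image_of_injective _ Sum.inl_injective,
          Set.ncard_image_of_injective _ Sum.inr_injective, ncard_prod',
          Set.ncard_univ, Nat.card_eq_fintype_card, Fintype.card_fin] at this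
      have hS1 : s + 1 ≤ S.ncard := hgt
      nlinarith [hge.trans hcard]
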